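/- arXiv:math/0607531 — 2 statements merged into one kernel-verified Lean document; each statement's English description precedes it below -/
import Mathlib

section
/- Let n ≠ m with n, m ≥ 3, and let C_n and C_m denote the cycles of orders n and m. Then D(C_n, C_m) ≤ ⌈log n⌉ + 1. -/
open FirstOrder Language SimpleGraph

universe u v

/-! ### Quantifier depth of first-order formulas -/

namespace FirstOrder.Language.BoundedFormula

variable {L : Language} {α : Type*}

/-- The quantifier depth (rank) of a first-order bounded formula. -/
def qdepth : ∀ {n : ℕ}, L.BoundedFormula α n → ℕ
  | _, .falsum => 0
  | _, .equal _ _ => 0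
  | _, .rel _ _ => 0
  | _, .imp f g => max f.qdepth g.qdepth
  | _, .all f => f.qdepth + 1

end FirstOrder.Language.BoundedFormula

/-! ### Logical depth of (finite) graphs -/

/-- A simple graph, viewed as a first-order structure over the language of graphs,
satisfies a sentence. -/
def SimpleGraph.RealizeSentence {V : Type u} (G : SimpleGraph V)
    (φ : Language.graph.Sentence) : Prop :=
  letI := G.structure
  V ⊨ φ

/-- The logical depth `D(G)` of a graph: the minimum quantifier depth of a first-order
sentence (in the language of adjacency and equality) true exactly on the finite graphs
isomorphic to `G`. -/
noncomputable def Dgraph {V : Type} (G : SimpleGraph V) : ℕ :=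
  sInf { k | ∃ φ : Language.graph.Sentence, φ.qdepth ≤ k ∧
    ∀ (W : Type) (_ : Fintype W) (H : SimpleGraph W),
      H.RealizeSentence φ ↔ Nonempty (G ≃g H) }

/-- `D(G,G')`: the minimum quantifier depth of a first-order sentence true on `G`
and false on `G'`. -/
noncomputable def DgraphPair {V : Type u} {W : Type v} (G : SimpleGraph V)
    (H : SimpleGraph W) : ℕ :=
  sInf { k | ∃ φ : Language.graph.Sentence, φ.qdepth ≤ k ∧
    G.RealizeSentence φ ∧ ¬ H.RealizeSentence φ }

/-! ### The language of two binary relations, and colored versions -/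

/-- Relation symbols: two binary relations. -/
inductive TwoRel : ℕ → Type
  | r1 : TwoRel 2
  | r2 : TwoRel 2

/-- The first-order language with two binary relation symbols. -/
def L2 : Language := ⟨fun _ => Empty, TwoRel⟩

/-- A pair of binary relations on `W` as an `L2`-structure. -/
def twoRelStructure {W : Type u} (R1 R2 : W → W → Prop) : L2.Structure W where
  funMap := fun f _ => f.elim
  RelMap := fun {n} r => match n, r with
    | _, .r1 => fun x => R1 (x 0) (x 1)
    | _, .r2 => fun x => R2 (x 0) (x 1)

/-- Satisfaction of an `L2`-sentence in a pair of binary relations. -/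
def Realize2 {W : Type u} (R1 R2 : W → W → Prop) (φ : L2.Sentence) : Prop :=
  letI := twoRelStructure R1 R2
  W ⊨ φ

/-- Isomorphism of two-relation structures. -/
def Iso2 {W : Type u} {X : Type v} (R1 R2 : W → W → Prop) (S1 S2 : X → X → Prop) : Prop :=
  ∃ e : W ≃ X, (∀ a b : W, R1 a b ↔ S1 (e a) (e b)) ∧ (∀ a b : W, R2 a b ↔ S2 (e a) (e b))

/-- The logical depth of a two-relation structure among finite two-relation structures. -/
noncomputable def D2 {W : Type} (R1 R2 : W → W → Prop) : ℕ :=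
  sInf { k | ∃ φ : L2.Sentence, φ.qdepth ≤ k ∧
    ∀ (X : Type) (_ : Fintype X) (S1 S2 : X → X → Prop),
      Realize2 S1 S2 φ ↔ Iso2 R1 R2 S1 S2 }

/-- `D(S,S')` for two-relation structures. -/
noncomputable def D2pair {W : Type u} {X : Type v} (R1 R2 : W → W → Prop)
    (S1 S2 : X → X → Prop) : ℕ :=
  sInf { k | ∃ φ : L2.Sentence, φ.qdepth ≤ k ∧
    Realize2 R1 R2 φ ∧ ¬ Realize2 S1 S2 φ }

/-- `D(S,v,S',v')` for two-relation structures with designated points: the minimum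
quantifier depth of a formula with one free variable distinguishing the points. -/
noncomputable def D2pointed {W : Type u} (R1 R2 : W → W → Prop) (vtx vtx' : W) : ℕ :=
  sInf { k | ∃ φ : L2.Formula Unit, φ.qdepth ≤ k ∧
    (letI := twoRelStructure R1 R2; φ.Realize (fun _ => vtx)) ∧
    ¬ (letI := twoRelStructure R1 R2; φ.Realize (fun _ => vtx')) }

/-- Relation symbols: two binary relations plus `k` unary color predicates. -/
inductive ColRel (k : ℕ) : ℕ → Type
  | r1 : ColRel k 2
  | r2 : ColRel k 2
  | col : Fin k → ColRel k 1

/-- The first-order language with two binary relation symbols and `k` unary colors. -/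
def LCol (k : ℕ) : Language := ⟨fun _ => Empty, ColRel k⟩

/-- A colored two-relation structure. -/
def colStructure {W : Type u} (k : ℕ) (c : Fin k → W → Prop) (R1 R2 : W → W → Prop) :
    (LCol k).Structure W where
  funMap := fun f _ => f.elim
  RelMap := fun {n} r => match n, r with
    | _, .r1 => fun x => R1 (x 0) (x 1)
    | _, .r2 => fun x => R2 (x 0) (x 1)
    | _, .col i => fun x => c i (x 0)

/-- Satisfaction of an `LCol k`-sentence in a colored two-relation structure. -/
def RealizeCol {W : Type u} (k : ℕ) (c : Fin k → W → Prop) (R1 R2 : W → W → Prop)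
    (φ : (LCol k).Sentence) : Prop :=
  letI := colStructure k c R1 R2
  W ⊨ φ

/-- Isomorphism of colored two-relation structures. -/
def IsoCol {W : Type u} {X : Type v} (k : ℕ) (c : Fin k → W → Prop)
    (R1 R2 : W → W → Prop) (c' : Fin k → X → Prop) (S1 S2 : X → X → Prop) : Prop :=
  ∃ e : W ≃ X, (∀ i w, c i w ↔ c' i (e w)) ∧
    (∀ a b : W, R1 a b ↔ S1 (e a) (e b)) ∧ (∀ a b : W, R2 a b ↔ S2 (e a) (e b))

/-- The logical depth of a colored two-relation structure among finite such structures. -/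
noncomputable def DCol {W : Type} (k : ℕ) (c : Fin k → W → Prop)
    (R1 R2 : W → W → Prop) : ℕ :=
  sInf { d | ∃ φ : (LCol k).Sentence, φ.qdepth ≤ d ∧
    ∀ (X : Type) (_ : Fintype X) (c' : Fin k → X → Prop) (S1 S2 : X → X → Prop),
      RealizeCol k c' S1 S2 φ ↔ IsoCol k c R1 R2 c' S1 S2 }

/-! ### Cycles, pseudo-facial cycles -/

/-- A subgraph is a cycle if it is finite, connected, and `2`-regular. -/
def IsCycleSubgraph {V : Type u} {G : SimpleGraph V} (C : G.Subgraph) : Prop :=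
  C.verts.Finite ∧ C.Connected ∧ ∀ v ∈ C.verts, (C.neighborSet v).ncard = 2

/-- `g(u,v)`: the minimum length of a cycle passing through `u` and `v`. -/
noncomputable def girthVia {V : Type u} (G : SimpleGraph V) (u v : V) : ℕ :=
  sInf { k | ∃ C : G.Subgraph, IsCycleSubgraph C ∧ u ∈ C.verts ∧ v ∈ C.verts ∧
    C.verts.ncard = k }

/-- `C` is the shortest cycle via `u` and `v`: a unique cycle of length at most `g(u,v)`
passing through `u` and `v`. -/
def IsShortestCycleVia {V : Type u} {G : SimpleGraph V} (C : G.Subgraph) (u v : V) : Prop :=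
  IsCycleSubgraph C ∧ u ∈ C.verts ∧ v ∈ C.verts ∧ C.verts.ncard ≤ girthVia G u v ∧
  ∀ D : G.Subgraph, IsCycleSubgraph D → u ∈ D.verts → v ∈ D.verts →
    D.verts.ncard ≤ girthVia G u v → D = C

/-- A cycle is pseudo-facial if for every two of its vertices non-adjacent along it,
it is the shortest cycle via these vertices. -/
def IsPseudoFacial {V : Type u} {G : SimpleGraph V} (C : G.Subgraph) : Prop :=
  IsCycleSubgraph C ∧
  ∀ u v : V, u ∈ C.verts → v ∈ C.verts → u ≠ v → ¬ C.Adj u v → IsShortestCycleVia C u v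

/-- `f(G)`: the maximum length of a pseudo-facial cycle of `G`. -/
noncomputable def maxFacialLen {V : Type u} (G : SimpleGraph V) : ℕ :=
  sSup { k | ∃ C : G.Subgraph, IsPseudoFacial C ∧ C.verts.ncard = k }

/-- An edge is outer if it belongs to exactly one pseudo-facial cycle. -/
def IsOuterEdge {V : Type u} (G : SimpleGraph V) (e : Sym2 V) : Prop :=
  e ∈ G.edgeSet ∧ ∃! C : G.Subgraph, IsPseudoFacial C ∧ e ∈ C.edgeSet

/-! ### Pseudo-BOP graphs -/

/-- A pseudo-BOP graph: no isolated vertices; every edge is on at least one and at most two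
pseudo-facial cycles; and if two edges at a vertex `v` are outer and lie on pseudo-facial
cycles, then `v` belongs to no other pseudo-facial cycle. -/
def IsPseudoBOP {V : Type u} (G : SimpleGraph V) : Prop :=
  (∀ x : V, ∃ y : V, G.Adj x y) ∧
  (∀ e ∈ G.edgeSet, ∃ C : G.Subgraph, IsPseudoFacial C ∧ e ∈ C.edgeSet) ∧
  (∀ e ∈ G.edgeSet, ∀ C D E : G.Subgraph,
    IsPseudoFacial C → IsPseudoFacial D → IsPseudoFacial E →
    e ∈ C.edgeSet → e ∈ D.edgeSet → e ∈ E.edgeSet → C = D ∨ C = E ∨ D = E) ∧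
  (∀ x y z : V, G.Adj x y → G.Adj y z → x ≠ z →
    IsOuterEdge G s(x, y) → IsOuterEdge G s(y, z) →
    ∀ C : G.Subgraph, IsPseudoFacial C → y ∈ C.verts →
      s(x, y) ∈ C.edgeSet ∨ s(y, z) ∈ C.edgeSet)

/-! ### The dual graph and the facing structure -/

/-- The vertex set of the dual graph: pseudo-facial cycles and outer edges. -/
def DualVert {V : Type u} (G : SimpleGraph V) : Type _ :=
  {C : G.Subgraph // IsPseudoFacial C} ⊕ {e : Sym2 V // IsOuterEdge G e}

/-- Adjacency in the dual graph. -/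
def dualAdj {V : Type u} (G : SimpleGraph V) : DualVert G → DualVert G → Prop
  | .inl C, .inl D => C ≠ D ∧ ∃ e : Sym2 V, e ∈ C.val.edgeSet ∧ e ∈ D.val.edgeSet
  | .inl C, .inr f => f.val ∈ C.val.edgeSet
  | .inr f, .inl C => f.val ∈ C.val.edgeSet
  | .inr _, .inr _ => False

/-- The dual graph (the dual tree when `G` is biconnected outerplanar): vertices are the
pseudo-facial cycles and outer edges; two cycles are adjacent iff they share an edge; a
cycle is adjacent to an outer edge iff it contains it. -/
def dualGraph {V : Type u} (G : SimpleGraph V) : SimpleGraph (DualVert G) where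
  Adj := dualAdj G
  symm := by
    constructor
    rintro (C | f) (D | g) h
    · exact ⟨Ne.symm h.1, h.2.imp fun e he => ⟨he.2, he.1⟩⟩
    · exact h
    · exact h
    · exact h.elim
  loopless := by
    constructor
    rintro (C | f) h
    · exact h.1 rfl
    · exact h.elim

/-- The crossing relation: the dual edge `{x,y}` crosses the `G`-edge `e`. -/
def crossesAt {V : Type u} {G : SimpleGraph V} : DualVert G → DualVert G → Sym2 V → Prop
  | .inl C, .inl D, e => C ≠ D ∧ e ∈ C.val.edgeSet ∧ e ∈ D.val.edgeSet
  | .inl C, .inr f, e => e = f.val ∧ f.val ∈ C.val.edgeSet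
  | .inr f, .inl C, e => e = f.val ∧ f.val ∈ C.val.edgeSet
  | .inr _, .inr _, _ => False

/-- A vertex of the dual graph is a leaf if it has exactly one neighbor. -/
def dualIsLeaf {V : Type u} (G : SimpleGraph V) (x : DualVert G) : Prop :=
  ((dualGraph G).neighborSet x).ncard = 1

/-- The first clause of the layout of the facing structure: `x` and `y` are common neighbors
of some dual vertex `v` and the crossed `G`-edges `{v,x}*`, `{v,y}*` are adjacent in `G`. -/
def facingL1 {V : Type u} (G : SimpleGraph V) (x y : DualVert G) : Prop :=
  x ≠ y ∧ ∃ z : DualVert G, (dualGraph G).Adj z x ∧ (dualGraph G).Adj z y ∧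
    ∃ e f : Sym2 V, crossesAt z x e ∧ crossesAt z y f ∧ e ≠ f ∧ ∃ w : V, w ∈ e ∧ w ∈ f

/-- The layout relation `L` of the facing structure `F(G) = ⟨H,L⟩`. -/
def facingLayout {V : Type u} (G : SimpleGraph V) (x y : DualVert G) : Prop :=
  facingL1 G x y ∨
  ∃ a b : DualVert G, (dualGraph G).Adj a b ∧ ¬ dualIsLeaf G a ∧ ¬ dualIsLeaf G b ∧
    (dualGraph G).Adj a x ∧ facingL1 G b x ∧ (dualGraph G).Adj b y ∧ facingL1 G a y ∧
    ∃ e f : Sym2 V, crossesAt a x e ∧ crossesAt b y f ∧ e ≠ f ∧ ∃ w : V, w ∈ e ∧ w ∈ f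

/-- Isomorphism of the facing structures of two graphs, as two-relation structures. -/
def FacingIso {V : Type u} {W : Type v} (G : SimpleGraph V) (G' : SimpleGraph W) : Prop :=
  ∃ e : DualVert G ≃ DualVert G',
    (∀ a b : DualVert G, (dualGraph G).Adj a b ↔ (dualGraph G').Adj (e a) (e b)) ∧
    (∀ a b : DualVert G, facingLayout G a b ↔ facingLayout G' (e a) (e b))

/-! ### Biconnected outerplanar graphs (dissections of a convex polygon) -/

/-- `x` lies strictly inside the arc from `a` to `b` (in the `+1` direction) of the
cycle on `ZMod n`. -/
def StrictInsideArc {n : ℕ} (a b x : ZMod n) : Prop :=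
  0 < (x - a).val ∧ (x - a).val < (b - a).val

/-- Chords `{a,b}` and `{c,d}` cross: the two arcs determined by `a`, `b` each contain
exactly one of `c`, `d` strictly inside. -/
def ChordsCross {n : ℕ} (a b c d : ZMod n) : Prop :=
  (StrictInsideArc a b c ∧ StrictInsideArc b a d) ∨
  (StrictInsideArc a b d ∧ StrictInsideArc b a c)

/-- `{a,b}` is a chord of the polygon: not an edge of the Hamiltonian cycle. -/
def IsChordPair {n : ℕ} (a b : ZMod n) : Prop := a ≠ b ∧ b ≠ a + 1 ∧ a ≠ b + 1

/-- A biconnected outerplanar graph, i.e. a dissection of the convex `n`-gon: the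
Hamiltonian cycle edges together with pairwise non-crossing chords. -/
def IsBOP {n : ℕ} (G : SimpleGraph (ZMod n)) : Prop :=
  3 ≤ n ∧ (∀ i : ZMod n, G.Adj i (i + 1)) ∧
  ∀ a b c d : ZMod n, G.Adj a b → G.Adj c d → IsChordPair a b → IsChordPair c d →
    ¬ ChordsCross a b c d

/-! ### Degrees, fineness, yuppies -/

/-- The maximum vertex degree of a graph. -/
noncomputable def maxDeg {W : Type u} (H : SimpleGraph W) : ℕ :=
  ⨆ w : W, (H.neighborSet w).ncard

/-- `H` is `r`-fine: every two vertex-disjoint paths on `r` vertices have different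
degree sequences. -/
def IsFine {W : Type u} (H : SimpleGraph W) (r : ℕ) : Prop :=
  ∀ (a b c d : W) (p : H.Walk a b) (q : H.Walk c d),
    p.IsPath → q.IsPath → p.support.length = r → q.support.length = r →
    (∀ x ∈ p.support, x ∉ q.support) →
    p.support.map (fun x => (H.neighborSet x).ncard) ≠
      q.support.map (fun x => (H.neighborSet x).ncard)

/-- `r(H)`: the minimum `r` such that `H` is `r`-fine. -/
noncomputable def fineness {W : Type u} (H : SimpleGraph W) : ℕ :=
  sInf { r | IsFine H r }

/-- An `r`-yuppie: a vertex `v` such that there are `u`, `w` with `d(u,w) = 2r` and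
`d(u,v) = d(v,w) = r`. -/
def IsYuppie {W : Type u} (H : SimpleGraph W) (r : ℕ) (x : W) : Prop :=
  ∃ p q : W, H.edist p q = 2 * r ∧ H.edist p x = r ∧ H.edist x q = r

/-! ### Graphs with layout -/

/-- A graph is a cycle graph: finite, connected and `2`-regular. -/
def IsCycleGraph {X : Type u} (K : SimpleGraph X) : Prop :=
  Finite X ∧ K.Connected ∧ ∀ x : X, (K.neighborSet x).ncard = 2

/-- `L` is a layout for `H` (where `H` has no degree-2 vertices and no triangles). -/
def IsLayout {W : Type u} (H L : SimpleGraph W) : Prop :=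
  (∀ x : W, (H.neighborSet x).ncard ≠ 2) ∧ H.CliqueFree 3 ∧
  (∀ x : W, 2 ≤ (H.neighborSet x).ncard → IsCycleGraph (L.induce (H.neighborSet x))) ∧
  (∀ p q v1 v2 u1 u2 : W, H.Adj p q →
    2 ≤ (H.neighborSet p).ncard → 2 ≤ (H.neighborSet q).ncard →
    v1 ≠ v2 → H.Adj p v1 → H.Adj p v2 → L.Adj q v1 → L.Adj q v2 →
    u1 ≠ u2 → H.Adj q u1 → H.Adj q u2 → L.Adj p u1 → L.Adj p u2 →
    (v1 ≠ u1 ∧ v1 ≠ u2 ∧ v2 ≠ u1 ∧ v2 ≠ u2) ∧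
    ((L.Adj v1 u1 ∧ L.Adj v2 u2) ∨ (L.Adj v1 u2 ∧ L.Adj v2 u1))) ∧
  (∀ a b : W, L.Adj a b →
    (∃ x : W, 2 ≤ (H.neighborSet x).ncard ∧ H.Adj x a ∧ H.Adj x b) ∨
    (∃ p q : W, H.Adj p q ∧ 2 ≤ (H.neighborSet p).ncard ∧ 2 ≤ (H.neighborSet q).ncard ∧
      H.Adj p a ∧ L.Adj q a ∧ H.Adj q b ∧ L.Adj p b))

/-! ### Chains and the line graph of a graph with layout -/

/-- The crossing relation lifted to unordered dual edges. -/
def crossesSym {V : Type u} {G : SimpleGraph V} (g : Sym2 (DualVert G)) (e : Sym2 V) : Prop :=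
  ∃ x y : DualVert G, g = s(x, y) ∧ crossesAt x y e

/-- Dual edges `g1` and `g2` are joined by a chain in the facing structure of `G`:
there is a path `v0, v1, ..., vk, v(k+1)` in the dual graph whose first edge is `g1`, whose
last edge is `g2`, and in which all pairs `{v_i, v_(i+2)}` and `{v_i, v_(i+3)}` are in the
layout relation. -/
def JoinedByChain {V : Type u} (G : SimpleGraph V) (g1 g2 : Sym2 (DualVert G)) : Prop :=
  ∃ l : List (DualVert G), ∃ hl : 3 ≤ l.length,
    l.Nodup ∧ l.Chain' (dualGraph G).Adj ∧
    (∀ (i : ℕ) (h : i + 2 < l.length), facingLayout G (l[i]'(by omega)) (l[i + 2]'h)) ∧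
    (∀ (i : ℕ) (h : i + 3 < l.length), facingLayout G (l[i]'(by omega)) (l[i + 3]'h)) ∧
    g1 = s(l[0]'(by omega), l[1]'(by omega)) ∧
    g2 = s(l[l.length - 2]'(by omega), l[l.length - 1]'(by omega))

/-! ### Shortest biconnections and boundary-like cycles -/

/-- The internal vertices of a walk from `u` to `v`. -/
def interiorSupport {V : Type u} {G : SimpleGraph V} {u v : V} (P : G.Walk u v) : Set V :=
  {x | x ∈ P.support ∧ x ≠ u ∧ x ≠ v}

/-- `u` and `v` split the cycle `C` into the two paths `P1` and `P2`. -/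
def SplitsInto {V : Type u} {G : SimpleGraph V} (C : G.Subgraph) {u v : V}
    (P1 P2 : G.Walk u v) : Prop :=
  P1.IsPath ∧ P2.IsPath ∧
  (∀ x : V, x ∈ P1.support → x ∈ P2.support → x = u ∨ x = v) ∧
  (∀ e ∈ P1.edges, e ∈ C.edgeSet) ∧ (∀ e ∈ P2.edges, e ∈ C.edgeSet) ∧
  (∀ e ∈ C.edgeSet, e ∈ P1.edges ∨ e ∈ P2.edges)

/-- `C` is the shortest biconnection of `u` and `v`. -/
def IsShortestBiconnection {V : Type u} {G : SimpleGraph V} (C : G.Subgraph)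
    (u v : V) : Prop :=
  IsCycleSubgraph C ∧ u ∈ C.verts ∧ v ∈ C.verts ∧
  ∃ P1 P2 : G.Walk u v, SplitsInto C P1 P2 ∧ 2 ≤ P1.length ∧ P1.length ≤ P2.length ∧
    (if P1.length = P2.length then
      P1.length = G.dist u v ∧
      ∀ Q : G.Walk u v, Q.IsPath → Q.length = G.dist u v → Q = P1 ∨ Q = P2
    else
      (P1.length = G.dist u v ∧
        ∀ Q : G.Walk u v, Q.IsPath → Q.length = G.dist u v → Q = P1) ∧
      (∀ Q : G.Walk u v, Q.IsPath → (∀ x ∈ Q.support, x ∉ interiorSupport P1) →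
        Q.length ≤ P2.length → Q = P2))

/-- A cycle is boundary-like if for every two of its vertices non-adjacent along it,
it is the shortest biconnection of these vertices. -/
def IsBoundaryLike {V : Type u} {G : SimpleGraph V} (C : G.Subgraph) : Prop :=
  IsCycleSubgraph C ∧
  ∀ u v : V, u ∈ C.verts → v ∈ C.verts → u ≠ v → ¬ C.Adj u v → IsShortestBiconnection C u v

/-!
A walk of length at most `d` from `x` to `y` splits at a midpoint `z` into walks of lengths at
most `⌈d/2⌉` and `⌊d/2⌋`, so "`dist(x, y) ≤ d`" is expressible with quantifier depth
`⌈log d⌉`.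

If `⌊n/2⌋ ≠ ⌊m/2⌋`, the diameters of `C_n` and `C_m` differ, and "some two vertices are at
distance more than `D`" separates them for `D` the smaller diameter. Otherwise
`{n, m} = {2t, 2t + 1}`; two balls of radii `a`, `b` with `a + b = t - 1` cover `C_2t` when
centred at antipodal vertices, but they contain at most `2a + 2b + 2 = 2t` vertices, so they
never cover `C_(2t+1)`.
-/

namespace FirstOrder.Language.BoundedFormula

variable {L : Language} {α : Type*} {n : ℕ}

@[simp] lemma qdepth_not (φ : L.BoundedFormula α n) : φ.not.qdepth = φ.qdepth :=
  Nat.max_zero _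

@[simp] lemma qdepth_all (φ : L.BoundedFormula α (n + 1)) : φ.all.qdepth = φ.qdepth + 1 := rfl

@[simp] lemma qdepth_ex (φ : L.BoundedFormula α (n + 1)) : φ.ex.qdepth = φ.qdepth + 1 := by
  simp [BoundedFormula.ex]

@[simp] lemma qdepth_inf (φ ψ : L.BoundedFormula α n) :
    (φ ⊓ ψ).qdepth = max φ.qdepth ψ.qdepth := by
  show max (max _ (max _ 0)) 0 = _
  simp

@[simp] lemma qdepth_sup (φ ψ : L.BoundedFormula α n) :
    (φ ⊔ ψ).qdepth = max φ.qdepth ψ.qdepth := by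
  show max (max _ 0) _ = _
  simp

end FirstOrder.Language.BoundedFormula

namespace SimpleGraph

variable {V : Type*} {G : SimpleGraph V}

lemma exists_edist_le_of_edist_le_add {u v : V} {a b : ℕ} (h : G.edist u v ≤ a + b) :
    ∃ w, G.edist u w ≤ a ∧ G.edist w v ≤ b := by
  obtain ⟨p, hp⟩ := exists_walk_of_edist_ne_top (h.trans_lt (by simp [← Nat.cast_add])).ne
  rw [← hp, ← Nat.cast_add, Nat.cast_le] at h
  refine ⟨p.getVert a, (edist_le (p.take a)).trans ?_, (edist_le (p.drop a)).trans ?_⟩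
  · rw [Walk.take_length, Nat.cast_le]
    omega
  · rw [Walk.drop_length, Nat.cast_le]
    omega

lemma realizeSentence_not (φ : Language.graph.Sentence) :
    G.RealizeSentence φ.not ↔ ¬ G.RealizeSentence φ :=
  letI := G.structure
  Sentence.realize_not V

end SimpleGraph

lemma dgraphPair_le_of_not_iff {V W : Type*} {G : SimpleGraph V} {H : SimpleGraph W}
    (φ : Language.graph.Sentence) {k : ℕ} (hφ : φ.qdepth ≤ k)
    (h : ¬ (G.RealizeSentence φ ↔ H.RealizeSentence φ)) : DgraphPair G H ≤ k := by
  by_cases hG : G.RealizeSentence φ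
  · exact Nat.sInf_le ⟨φ, hφ, hG, fun hH => h (iff_of_true hG hH)⟩
  · refine Nat.sInf_le ⟨φ.not, (BoundedFormula.qdepth_not φ).trans_le hφ, ?_, ?_⟩ <;>
      simp only [SimpleGraph.realizeSentence_not] <;> tauto

namespace FirstOrder.Language.graph

open BoundedFormula

variable {α : Type*}

def distLE : ℕ → {k : ℕ} → Fin k → Fin k → Language.graph.BoundedFormula α k
  | 0, _, i, j => (Term.var (.inr i)).bdEqual (Term.var (.inr j))
  | 1, _, i, j => (Term.var (.inr i)).bdEqual (Term.var (.inr j)) ⊔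
      adj.boundedFormula₂ (Term.var (.inr i)) (Term.var (.inr j))
  | d + 2, _, i, j =>
      (distLE ((d + 3) / 2) i.castSucc (Fin.last _) ⊓
        distLE ((d + 2) / 2) (Fin.last _) j.castSucc).ex

lemma qdepth_distLE (d : ℕ) {k : ℕ} (i j : Fin k) :
    (distLE d i j : Language.graph.BoundedFormula α k).qdepth ≤ Nat.clog 2 d := by
  induction d, k, i, j using distLE.induct with
  | case1 | case2 => rw [distLE]; exact Nat.zero_le _
  | case3 k d i j ih₁ ih₂ =>
    have hclog : Nat.clog 2 (d + 2) = Nat.clog 2 ((d + 3) / 2) + 1 :=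
      Nat.clog_of_two_le one_lt_two (by omega)
    have hmono := Nat.clog_mono_right 2 (show (d + 2) / 2 ≤ (d + 3) / 2 by omega)
    rw [distLE, qdepth_ex, qdepth_inf, hclog]
    exact Nat.add_le_add_right (max_le ih₁ (ih₂.trans hmono)) 1

lemma realize_distLE {V : Type*} (G : SimpleGraph V) (d : ℕ) {k : ℕ} (i j : Fin k)
    (v : α → V) (xs : Fin k → V) :
    (letI := G.structure; (distLE d i j).Realize v xs) ↔ G.edist (xs i) (xs j) ≤ d := by
  induction d, k, i, j using distLE.induct with
  | case1 k i j => simp [distLE, SimpleGraph.edist_eq_zero_iff]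
  | case2 k i j =>
    simp only [distLE, realize_sup, realize_bdEqual, Term.realize_var, Sum.elim_inr,
      realize_rel₂, Nat.cast_one, SimpleGraph.edist_le_one_iff_adj_or_eq, or_comm]
    exact Iff.rfl
  | case3 k d i j ih₁ ih₂ =>
    have hsplit : (((d + 3) / 2 + (d + 2) / 2 : ℕ) : ℕ∞) = (d + 2 : ℕ) := by
      congr 1
      omega
    simp only [distLE, realize_ex, realize_inf, ih₁, ih₂, Fin.snoc_castSucc, Fin.snoc_last]
    constructor
    · rintro ⟨z, h₁, h₂⟩
      calc G.edist (xs i) (xs j) ≤ G.edist (xs i) z + G.edist z (xs j) := G.edist_triangle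
        _ ≤ ((d + 3) / 2 + (d + 2) / 2 : ℕ) := by rw [Nat.cast_add]; exact add_le_add h₁ h₂
        _ = (d + 2 : ℕ) := hsplit
    · intro h
      exact SimpleGraph.exists_edist_le_of_edist_le_add (h.trans_eq hsplit.symm)

def farPair (D : ℕ) : Language.graph.Sentence :=
  (distLE D (0 : Fin 2) 1).not.ex.ex

def twoBallCover (a b : ℕ) : Language.graph.Sentence :=
  (distLE a (0 : Fin 3) 2 ⊔ distLE b 2 1).all.ex.ex

lemma qdepth_farPair (D : ℕ) : (farPair D).qdepth ≤ Nat.clog 2 D + 2 := by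
  simpa [farPair] using qdepth_distLE D (0 : Fin 2) 1

lemma qdepth_twoBallCover (a b : ℕ) :
    (twoBallCover a b).qdepth ≤ max (Nat.clog 2 a) (Nat.clog 2 b) + 3 := by
  have h₁ := qdepth_distLE (α := Empty) a (0 : Fin 3) 2
  have h₂ := qdepth_distLE (α := Empty) b (2 : Fin 3) 1
  simp only [twoBallCover, qdepth_ex, qdepth_all, qdepth_sup]
  omega

variable {V : Type*} (G : SimpleGraph V)

lemma realize_farPair (D : ℕ) :
    G.RealizeSentence (farPair D) ↔ ∃ x y, (D : ℕ∞) < G.edist x y := by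
  simp only [SimpleGraph.RealizeSentence, farPair, Sentence.Realize, Formula.Realize, realize_ex,
    realize_not, realize_distLE, not_le]
  rfl

lemma realize_twoBallCover (a b : ℕ) :
    G.RealizeSentence (twoBallCover a b) ↔
      ∃ x y, ∀ z, G.edist x z ≤ a ∨ G.edist z y ≤ b := by
  simp only [SimpleGraph.RealizeSentence, twoBallCover, Sentence.Realize, Formula.Realize,
    realize_ex, realize_all, realize_sup, realize_distLE]
  rfl

end FirstOrder.Language.graph

lemma Fin.val_sub_eq_ite {N : ℕ} (a b : Fin N) :
    (a - b).val = if b.val ≤ a.val then a.val - b.val else N + a.val - b.val := by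
  split_ifs with h
  · exact Fin.sub_val_of_le h
  · exact Fin.coe_sub_iff_lt.2 (not_le.1 h)

namespace SimpleGraph

variable {N : ℕ}

lemma cycleGraph_exists_walk_length_eq_val_sub (x y : Fin N) :
    ∃ w : (cycleGraph N).Walk x y, w.length = (y - x).val := by
  have : NeZero N := ⟨x.pos.ne'⟩
  induction h : (y - x).val generalizing y with
  | zero => exact ⟨Walk.nil.copy rfl (sub_eq_zero.1 (Fin.ext h)).symm, by simp⟩
  | succ k ih =>
    have hyx : y - x ≠ 0 := fun h0 => by simp [h0] at h
    obtain ⟨w, hw⟩ := ih (y - 1) (by rw [sub_right_comm, Fin.val_sub_one_of_ne_zero hyx, h]; rfl)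
    have hadj : (cycleGraph N).Adj (y - 1) y := by
      have := (y - x).isLt
      rw [cycleGraph_adj', sub_sub_cancel, Fin.val_one', Nat.mod_eq_of_lt (by omega)]
      exact Or.inr rfl
    exact ⟨w.concat hadj, by rw [Walk.length_concat, hw]⟩

lemma cycleGraph_min_val_sub_le_length {x y : Fin N} (w : (cycleGraph N).Walk x y) :
    min (y - x).val (x - y).val ≤ w.length := by
  induction w with
  | nil => simp [Fin.val_sub_eq_ite]
  | @cons x b c h w ih =>
    rw [cycleGraph_adj'] at h
    rw [Walk.length_cons]
    have := x.isLt; have := b.isLt; have := c.isLt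
    simp only [Fin.val_sub_eq_ite] at h ih ⊢
    split_ifs at h ih ⊢ <;> omega

lemma cycleGraph_edist (x y : Fin N) :
    (cycleGraph N).edist x y = min (y - x).val (x - y).val := by
  refine le_antisymm ?_ ?_
  · obtain ⟨w₁, hw₁⟩ := cycleGraph_exists_walk_length_eq_val_sub x y
    obtain ⟨w₂, hw₂⟩ := cycleGraph_exists_walk_length_eq_val_sub y x
    rw [Nat.mono_cast.map_min]
    exact le_min (hw₁ ▸ edist_le w₁) (edist_comm.trans_le (hw₂ ▸ edist_le w₂))
  · obtain ⟨w, hw⟩ := (cycleGraph_preconnected x y).exists_walk_length_eq_edist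
    rw [← hw]
    exact_mod_cast cycleGraph_min_val_sub_le_length w

open FirstOrder.Language.graph

lemma realize_farPair_cycleGraph (N D : ℕ) :
    (cycleGraph N).RealizeSentence (farPair D) ↔ D < N / 2 := by
  simp only [realize_farPair, cycleGraph_edist, Nat.cast_lt]
  constructor
  · rintro ⟨x, y, h⟩
    have := x.isLt; have := y.isLt
    simp only [Fin.val_sub_eq_ite] at h
    split_ifs at h <;> omega
  · intro h
    refine ⟨⟨0, by omega⟩, ⟨N / 2, by omega⟩, ?_⟩
    simp only [Fin.val_sub_eq_ite]
    split_ifs <;> omega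

lemma realize_twoBallCover_cycleGraph_two_mul (a b : ℕ) :
    (cycleGraph (2 * (a + b + 1))).RealizeSentence (twoBallCover a b) := by
  rw [realize_twoBallCover]
  refine ⟨⟨0, by omega⟩, ⟨a + b + 1, by omega⟩, fun z => ?_⟩
  simp only [cycleGraph_edist, Nat.cast_le]
  have := z.isLt
  simp only [Fin.val_sub_eq_ite]
  split_ifs <;> omega

lemma not_realize_twoBallCover_cycleGraph_two_mul_add_one {a b : ℕ} (hba : b ≤ a) :
    ¬ (cycleGraph (2 * (a + b + 1) + 1)).RealizeSentence (twoBallCover a b) := by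
  rw [realize_twoBallCover]
  push Not
  intro x y
  -- step `a + 1` away from `x`, on the side of the cycle away from `y`
  obtain ⟨c, hc⟩ : ∃ c : Fin (2 * (a + b + 1) + 1), c.val = a + 1 := ⟨⟨a + 1, by omega⟩, rfl⟩
  refine ⟨if (y - x).val ≤ a + b + 1 then x - c else x + c, ?_⟩
  simp only [cycleGraph_edist, Nat.cast_lt]
  have := x.isLt; have := y.isLt
  split_ifs with h <;> simp only [Fin.val_sub_eq_ite, Fin.val_add_eq_ite] at h ⊢ <;>
    split_ifs at h ⊢ <;> omega

end SimpleGraph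

theorem statement_1_general (n m : ℕ) (hn : 3 ≤ n) (hnm : n ≠ m) :
    DgraphPair (SimpleGraph.cycleGraph n) (SimpleGraph.cycleGraph m) ≤ Nat.clog 2 n + 1 := by
  have hclog := Nat.clog_of_two_le one_lt_two (show 2 ≤ n by omega)
  rcases ne_or_eq (n / 2) (m / 2) with hhalf | hhalf
  · refine dgraphPair_le_of_not_iff (graph.farPair (min (n / 2) (m / 2))) ?_ ?_
    · have hmono := Nat.clog_mono_right 2 (show min (n / 2) (m / 2) ≤ (n + 2 - 1) / 2 by omega)
      have := graph.qdepth_farPair (min (n / 2) (m / 2))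
      omega
    · rw [realize_farPair_cycleGraph, realize_farPair_cycleGraph]
      omega
  · obtain ⟨a, b, ha, hb⟩ : ∃ a b, a = n / 4 ∧ b = (n / 2 - 1) / 2 := ⟨_, _, rfl, rfl⟩
    refine dgraphPair_le_of_not_iff (graph.twoBallCover a b) ?_ ?_
    · have hclog' := Nat.clog_of_two_le one_lt_two (show 2 ≤ (n + 2 - 1) / 2 by omega)
      have hmono := Nat.clog_mono_right 2 (show a ≤ ((n + 2 - 1) / 2 + 2 - 1) / 2 by omega)
      have hmono' := Nat.clog_mono_right 2 (show b ≤ a by omega)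
      have := graph.qdepth_twoBallCover a b
      omega
    · have heven := realize_twoBallCover_cycleGraph_two_mul a b
      have hodd := not_realize_twoBallCover_cycleGraph_two_mul_add_one (show b ≤ a by omega)
      obtain ⟨rfl, rfl⟩ | ⟨rfl, rfl⟩ : n = 2 * (a + b + 1) ∧ m = 2 * (a + b + 1) + 1 ∨
          n = 2 * (a + b + 1) + 1 ∧ m = 2 * (a + b + 1) := by omega
      all_goals tauto

/-- For `n ≠ m`, `D(C_n, C_m) ≤ ⌈log n⌉ + 1`. -/
theorem statement_1 (n m : ℕ) (hn : 3 ≤ n) (hm : 3 ≤ m) (hnm : n ≠ m) :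
    DgraphPair (SimpleGraph.cycleGraph n) (SimpleGraph.cycleGraph m) ≤ Nat.clog 2 n + 1 :=
  statement_1_general n m hn hnm
end

section
/- In any graph, two distinct pseudo-facial cycles have at most two vertices in common, and if they have exactly two common vertices u and v, then {u,v} is an edge belonging to both cycles. -/
open FirstOrder Language SimpleGraph

universe u v

/-! A pseudo-facial cycle `C` is chordless: if `u, v ∈ C` are adjacent in `G` but not along `C`,
the edge `uv` closes a `u`–`v` path of `C` into a cycle through `u` and `v` with at most `|C|`
vertices, which is not `C`, contradicting that `C` is the shortest cycle via `u` and `v`.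
So if distinct pseudo-facial cycles `C`, `D` share vertices `u ≠ v`, these are adjacent along both:
otherwise one of them is the shortest cycle via `u` and `v` while the other is a cycle through
`u` and `v` at most as long. Three common vertices would thus span a triangle in both cycles, and a
cycle containing a triangle is that triangle, while two chordless cycles on the same vertices
coincide. -/

open SimpleGraph

variable {V : Type u} {G : SimpleGraph V}

lemma SimpleGraph.Subgraph.Connected.verts_subset_of_adj_closed {H : G.Subgraph}
    (hH : H.Connected) {S : Set V} (hS : ∀ a b, a ∈ S → H.Adj a b → b ∈ S) {x : V}
    (hx : x ∈ H.verts) (hxS : x ∈ S) : H.verts ⊆ S := by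
  suffices ∀ (a b : H.verts) (_ : H.coe.Walk a b), (a : V) ∈ S → (b : V) ∈ S from
    fun w hw => this _ ⟨w, hw⟩ (hH.preconnected ⟨x, hx⟩ ⟨w, hw⟩).some hxS
  intro a b p
  induction p with
  | nil => exact id
  | cons h _ ih => exact fun ha => ih (hS _ _ ha h)

lemma SimpleGraph.Walk.IsCycle.isCycleSubgraph_toSubgraph {u : V} {c : G.Walk u u}
    (hc : c.IsCycle) : IsCycleSubgraph c.toSubgraph :=
  ⟨by simpa only [c.verts_toSubgraph] using c.support.finite_toSet, c.toSubgraph_connected,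
    fun _ hv => hc.ncard_neighborSet_toSubgraph_eq_two (c.mem_verts_toSubgraph.mp hv)⟩

namespace IsCycleSubgraph

variable {C : G.Subgraph}

lemma neighborSet_eq_pair (hC : IsCycleSubgraph C) {p q r : V} (hqr : q ≠ r)
    (hpq : C.Adj p q) (hpr : C.Adj p r) : C.neighborSet p = {q, r} := by
  refine (Set.eq_of_subset_of_ncard_le ?_ ?_ (hC.1.subset (C.neighborSet_subset_verts p))).symm
  · exact Set.insert_subset hpq (Set.singleton_subset_iff.mpr hpr)
  · rw [hC.2.2 p hpq.fst_mem, Set.ncard_pair hqr]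

lemma verts_eq_of_triangle (hC : IsCycleSubgraph C) {x y z : V}
    (hxy : C.Adj x y) (hxz : C.Adj x z) (hyz : C.Adj y z) : C.verts = {x, y, z} := by
  have hclosed : ∀ a b, a ∈ ({x, y, z} : Set V) → C.Adj a b → b ∈ ({x, y, z} : Set V) := by
    rintro a b (rfl | rfl | rfl) hab <;> have hb : b ∈ C.neighborSet a := hab
    · rw [hC.neighborSet_eq_pair (C.adj_sub hyz).ne hxy hxz] at hb
      rcases hb with rfl | rfl <;> simp
    · rw [hC.neighborSet_eq_pair (C.adj_sub hxz).ne hxy.symm hyz] at hb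
      rcases hb with rfl | rfl <;> simp
    · rw [hC.neighborSet_eq_pair (C.adj_sub hxy).ne hxz.symm hyz.symm] at hb
      rcases hb with rfl | rfl <;> simp
  refine (hC.2.1.verts_subset_of_adj_closed hclosed hxy.fst_mem (Or.inl rfl)).antisymm ?_
  rintro w (rfl | rfl | rfl)
  exacts [hxy.fst_mem, hxy.snd_mem, hxz.snd_mem]

end IsCycleSubgraph

namespace IsPseudoFacial

variable {C D : G.Subgraph}

lemma adj_of_adj (hD : IsPseudoFacial D) {u v : V} (hu : u ∈ D.verts) (hv : v ∈ D.verts)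
    (huv : G.Adj u v) : D.Adj u v := by
  classical
  by_contra hDuv
  have hshort := hD.2 u v hu hv huv.ne hDuv
  obtain ⟨p, hpD⟩ := (Subgraph.connected_iff_forall_exists_walk_subgraph D).mp hD.1.2.1 |>.2 hv hu
  have hqD : p.bypass.toSubgraph ≤ D := Walk.toSubgraph_bypass_le_toSubgraph.trans hpD
  have hcyc : (Walk.cons huv p.bypass).IsCycle := by
    refine (Walk.cons_isCycle_iff _ huv).mpr ⟨p.bypass_isPath, fun he => hDuv ?_⟩
    exact Subgraph.edgeSet_mono hqD (p.bypass.mem_edges_toSubgraph.mpr he)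
  have hverts : (Walk.cons huv p.bypass).toSubgraph.verts ⊆ D.verts := by
    intro w hw
    rw [Walk.mem_verts_toSubgraph, Walk.support_cons, List.mem_cons] at hw
    rcases hw with rfl | hw
    exacts [hu, hqD.1 (p.bypass.mem_verts_toSubgraph.mpr hw)]
  have hEq := hshort.2.2.2.2 _ hcyc.isCycleSubgraph_toSubgraph
    (Walk.start_mem_verts_toSubgraph _) (by simp)
    ((Set.ncard_le_ncard hverts hD.1.1).trans hshort.2.2.2.1)
  exact hDuv (hEq ▸ by simp)

lemma eq_of_verts_eq (hC : IsPseudoFacial C) (hD : IsPseudoFacial D) (h : C.verts = D.verts) :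
    C = D := by
  refine Subgraph.ext h (funext₂ fun a b => propext ⟨fun hab => ?_, fun hab => ?_⟩)
  · exact hD.adj_of_adj (h ▸ hab.fst_mem) (h ▸ hab.snd_mem) (C.adj_sub hab)
  · exact hC.adj_of_adj (h ▸ hab.fst_mem) (h ▸ hab.snd_mem) (D.adj_sub hab)

lemma adj_of_mem_inter (hC : IsPseudoFacial C) (hD : IsPseudoFacial D) (hCD : C ≠ D) {u v : V}
    (hu : u ∈ C.verts ∩ D.verts) (hv : v ∈ C.verts ∩ D.verts) (huv : u ≠ v) : C.Adj u v := by
  by_contra hCuv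
  have hDuv : ¬ D.Adj u v := fun h => hCuv (hC.adj_of_adj hu.1 hv.1 (D.adj_sub h))
  have hsC := hC.2 u v hu.1 hv.1 huv hCuv
  have hsD := hD.2 u v hu.2 hv.2 huv hDuv
  exact hCD (hsC.2.2.2.2 D hD.1 hu.2 hv.2 hsD.2.2.2.1).symm

end IsPseudoFacial

/-- Two distinct pseudo-facial cycles have at most two vertices in common,
and if they have exactly two common vertices `u`, `v`, then `{u,v}` is an edge of both. -/
theorem statement_9 {V : Type u} (G : SimpleGraph V) (C D : G.Subgraph)
    (hC : IsPseudoFacial C) (hD : IsPseudoFacial D) (hne : C ≠ D) :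
    (C.verts ∩ D.verts).ncard ≤ 2 ∧
    ∀ x y : V, x ≠ y → C.verts ∩ D.verts = {x, y} →
      s(x, y) ∈ C.edgeSet ∧ s(x, y) ∈ D.edgeSet := by
  have hadj {u v : V} (hu : u ∈ C.verts ∩ D.verts) (hv : v ∈ C.verts ∩ D.verts) (huv : u ≠ v) :
      C.Adj u v ∧ D.Adj u v :=
    ⟨hC.adj_of_mem_inter hD hne hu hv huv,
      hD.adj_of_mem_inter hC hne.symm (Set.inter_comm _ _ ▸ hu) (Set.inter_comm _ _ ▸ hv) huv⟩
  refine ⟨?_, fun x y hxy hxyCD => ?_⟩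
  · by_contra! hcard
    obtain ⟨x, y, z, hx, hy, hz, hxy, hxz, hyz⟩ :=
      (Set.two_lt_ncard_iff (hC.1.1.inter_of_left _)).mp hcard
    have hCverts := hC.1.verts_eq_of_triangle (hadj hx hy hxy).1 (hadj hx hz hxz).1
      (hadj hy hz hyz).1
    have hDverts := hD.1.verts_eq_of_triangle (hadj hx hy hxy).2 (hadj hx hz hxz).2
      (hadj hy hz hyz).2
    exact hne (hC.eq_of_verts_eq hD (hCverts.trans hDverts.symm))
  · have hx : x ∈ C.verts ∩ D.verts := hxyCD ▸ Set.mem_insert x {y}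
    have hy : y ∈ C.verts ∩ D.verts := hxyCD ▸ Set.mem_insert_of_mem x rfl
    exact hadj hx hy hxy
end
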